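/- Let (θ,p) ~ N(0, I₂) on ℝ² and ΔH = (1/2)(Aθ² + 2Bθp + Cp²) with A = sin²(α)(χ⁻² − 1), B = cos(α)sin(α)(χ − χ⁻¹), C = sin²(α)(χ² − 1), α ∈ ℝ, χ > 0. Set μ = E[ΔH]. Then E[(ΔH)⁴] = 36μ² + 180μ³ + 105μ⁴. -/

import Mathlib

/-!
The energy error is the quadratic form `ΔH = ½ vᵀ M v` with `I + M = Φᵀ Φ` for the one-step
map `Φ` of the integrator; volume preservation gives `det (I + M) = 1`, i.e.
`B² = A + C + A C`. Expanding `ΔH⁴` over the independent coordinates and inserting the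
standard Gaussian moments `E[θ^(2k)] = (2k - 1)‼` (from Stein's identity `E[θ f(θ)] = E[f'(θ)]`)
gives `E[ΔH⁴]` as a polynomial in `A, B, C`, while `μ = (A + C) / 2`. Eliminating `B²` with the
determinant relation leaves a polynomial in `μ` alone.
-/

open MeasureTheory Real ProbabilityTheory Finset
open scoped NNReal Nat

namespace ProbabilityTheory

lemma hasDerivAt_gaussianPDFReal (m : ℝ) (v : ℝ≥0) (x : ℝ) :
    HasDerivAt (gaussianPDFReal m v) (-(x - m) / v * gaussianPDFReal m v x) x := by
  have hexponent : HasDerivAt (fun y => -(y - m) ^ 2 / (2 * v)) (-(x - m) / v) x := by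
    refine ((((hasDerivAt_id' x).sub_const m).fun_pow 2).fun_neg.div_const _).congr_deriv ?_
    by_cases hv : (v : ℝ) = 0
    · simp [hv]
    · field_simp
      ring
  refine (hexponent.exp.const_mul (√(2 * π * v))⁻¹).congr_deriv ?_
  simp only [gaussianPDFReal]
  ring

lemma integrable_pow_gaussianReal (m : ℝ) (v : ℝ≥0) (n : ℕ) :
    Integrable (fun x => x ^ n) (gaussianReal m v) :=
  integrable_pow_of_mem_interior_integrableExpSet (X := id)
    (by simp [integrableExpSet_id_gaussianReal]) n

lemma integrable_gaussianPDFReal_mul_pow (m : ℝ) {v : ℝ≥0} (hv : v ≠ 0) (n : ℕ) :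
    Integrable (fun x => gaussianPDFReal m v x * x ^ n) := by
  have h := integrable_pow_gaussianReal m v n
  rw [gaussianReal_of_var_ne_zero m hv, gaussianPDF_def,
    integrable_withDensity_iff_integrable_smul' (by fun_prop) (by simp)] at h
  simpa [ENNReal.toReal_ofReal (gaussianPDFReal_nonneg m v _)] using h

lemma integral_sub_mul_pow_gaussianReal (m : ℝ) (v : ℝ≥0) (n : ℕ) :
    ∫ x, (x - m) * x ^ (n + 1) ∂gaussianReal m v = v * (n + 1) * ∫ x, x ^ n ∂gaussianReal m v := by
  rcases eq_or_ne v 0 with rfl | hv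
  · simp [gaussianReal_zero_var]
  set ρ := gaussianPDFReal m v
  have hI (k : ℕ) : Integrable (fun x => ρ x * x ^ k) := integrable_gaussianPDFReal_mul_pow m hv k
  have hderiv (x : ℝ) : HasDerivAt (fun x => x ^ (n + 1) * ρ x)
      ((n + 1) * (ρ x * x ^ n) - (v : ℝ)⁻¹ * (ρ x * x ^ (n + 2))
        + m * (v : ℝ)⁻¹ * (ρ x * x ^ (n + 1))) x := by
    refine ((hasDerivAt_pow (n + 1) x).mul (hasDerivAt_gaussianPDFReal m v x)).congr_deriv ?_
    push_cast
    ring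
  have hdiff : Integrable
      (fun x => (n + 1) * (ρ x * x ^ n) - (v : ℝ)⁻¹ * (ρ x * x ^ (n + 2))) :=
    ((hI n).const_mul _).sub ((hI (n + 2)).const_mul _)
  have hzero := integral_eq_zero_of_hasDerivAt_of_integrable hderiv
    (hdiff.add ((hI (n + 1)).const_mul _)) (by simpa only [mul_comm] using hI (n + 1))
  rw [integral_add hdiff ((hI (n + 1)).const_mul _),
    integral_sub ((hI n).const_mul _) ((hI (n + 2)).const_mul _),
    integral_const_mul, integral_const_mul, integral_const_mul] at hzero
  rw [integral_gaussianReal_eq_integral_smul hv, integral_gaussianReal_eq_integral_smul hv]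
  simp only [smul_eq_mul]
  rw [show (fun x => ρ x * ((x - m) * x ^ (n + 1)))
      = fun x => ρ x * x ^ (n + 2) - m * (ρ x * x ^ (n + 1)) by funext x; ring,
    integral_sub (hI (n + 2)) ((hI (n + 1)).const_mul _), integral_const_mul]
  field_simp at hzero
  linear_combination -hzero

lemma integral_pow_gaussianReal_zero_one (n : ℕ) :
    ∫ x, x ^ n ∂gaussianReal 0 1 = if Even n then ((n - 1)‼ : ℝ) else 0 := by
  induction n using Nat.twoStepInduction with
  | zero => simp
  | one =>
    simp only [pow_one, Nat.not_even_one, if_false]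
    exact integral_id_gaussianReal
  | more n ih _ =>
    have hrec := integral_sub_mul_pow_gaussianReal 0 1 n
    simp only [sub_zero, ← pow_succ', NNReal.coe_one, one_mul] at hrec
    rw [hrec, ih]
    simp only [Nat.even_add, even_two, iff_true]
    split_ifs
    · rcases n with _ | n
      · simp
      · rw [show n + 1 + 2 - 1 = n + 2 by omega, Nat.doubleFactorial_add_two]
        push_cast
        ring_nf
    · simp

end ProbabilityTheory

section QuadraticForm

variable {μ ν : Measure ℝ} [SFinite μ] [SFinite ν]

lemma integral_quadratic_pow_prod (hμ : ∀ k : ℕ, Integrable (fun x => x ^ k) μ)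
    (hν : ∀ k : ℕ, Integrable (fun y => y ^ k) ν) (a b c : ℝ) (n : ℕ) :
    ∫ z, (a * z.1 ^ 2 + b * z.1 * z.2 + c * z.2 ^ 2) ^ n ∂μ.prod ν =
      ∑ i ∈ range (n + 1), ∑ j ∈ range (n - i + 1),
        n.choose i * (n - i).choose j * a ^ i * b ^ j * c ^ (n - i - j) *
          ((∫ x, x ^ (2 * i + j) ∂μ) * ∫ y, y ^ (j + 2 * (n - i - j)) ∂ν) := by
  have hexpand (z : ℝ × ℝ) : (a * z.1 ^ 2 + b * z.1 * z.2 + c * z.2 ^ 2) ^ n =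
      ∑ i ∈ range (n + 1), ∑ j ∈ range (n - i + 1),
        n.choose i * (n - i).choose j * a ^ i * b ^ j * c ^ (n - i - j) *
          (z.1 ^ (2 * i + j) * z.2 ^ (j + 2 * (n - i - j))) := by
    rw [add_assoc, add_pow]
    refine sum_congr rfl fun i _ => ?_
    rw [add_pow, mul_sum, sum_mul]
    refine sum_congr rfl fun j _ => ?_
    ring
  have hmonomial (i j : ℕ) : Integrable (fun z : ℝ × ℝ => z.1 ^ i * z.2 ^ j) (μ.prod ν) :=
    (hμ i).mul_prod (hν j)
  simp_rw [hexpand]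
  rw [integral_finsetSum _ fun i _ =>
    integrable_finsetSum _ fun j _ => (hmonomial _ _).const_mul _]
  refine sum_congr rfl fun i _ => ?_
  rw [integral_finsetSum _ fun j _ => (hmonomial _ _).const_mul _]
  refine sum_congr rfl fun j _ => ?_
  rw [integral_const_mul, integral_prod_mul (fun x => x ^ _) (fun y => y ^ _)]

end QuadraticForm

lemma energyError_coeffs_det {α χ A B C : ℝ} (hχ : χ ≠ 0)
    (hA : A = sin α ^ 2 * (χ⁻¹ ^ 2 - 1)) (hB : B = cos α * sin α * (χ - χ⁻¹))
    (hC : C = sin α ^ 2 * (χ ^ 2 - 1)) :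
    (1 + A) * (1 + C) - B ^ 2 = 1 := by
  subst hA hB hC
  field_simp
  linear_combination -(χ ^ 2 - 1) ^ 2 * sin α ^ 2 * sin_sq_add_cos_sq α

/-- Moment of the energy error for the standard univariate Gaussian target:
a universal polynomial in the mean energy error μ. -/
theorem energy_error_moment_4
    (α χ : ℝ) (hχ : 0 < χ)
    (A B C : ℝ)
    (hA : A = Real.sin α ^ 2 * (χ⁻¹ ^ 2 - 1))
    (hB : B = Real.cos α * Real.sin α * (χ - χ⁻¹))
    (hC : C = Real.sin α ^ 2 * (χ ^ 2 - 1))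
    (ΔH : ℝ × ℝ → ℝ)
    (hΔH : ΔH = fun v =>
      (1 / 2) * (A * v.1 ^ 2 + 2 * B * v.1 * v.2 + C * v.2 ^ 2))
    (μ : ℝ)
    (hμ : μ = ∫ v, ΔH v ∂((gaussianReal 0 1).prod (gaussianReal 0 1))) :
    (∫ v, (ΔH v) ^ 4 ∂((gaussianReal 0 1).prod (gaussianReal 0 1))) = 36 * μ ^ 2 + 180 * μ ^ 3 + 105 * μ ^ 4 := by
  have hdet := energyError_coeffs_det hχ.ne' hA hB hC
  have hΔH' : ΔH = fun v => A / 2 * v.1 ^ 2 + B * v.1 * v.2 + C / 2 * v.2 ^ 2 := by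
    rw [hΔH]
    funext v
    ring
  have hmoment := integral_quadratic_pow_prod (integrable_pow_gaussianReal 0 1)
    (integrable_pow_gaussianReal 0 1) (A / 2) B (C / 2)
  have hmean := hmoment 1
  have hfourth := hmoment 4
  norm_num [sum_range_succ, integral_pow_gaussianReal_zero_one, Nat.doubleFactorial,
    Nat.choose] at hmean hfourth
  subst hμ
  rw [hΔH', hmean, hfourth]
  linear_combination
    -(9 * B ^ 2 + 45 / 2 * A ^ 2 + 45 / 2 * C ^ 2 + 36 * A * C + 9 * A + 9 * C) * hdet
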